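/- arXiv:2208.12024 — 5 statements merged into one kernel-verified Lean document; each statement's English description precedes it below -/
import Mathlib

section
/- Let A = (a_{ji}) be a J×I matrix with nonnegative real entries such that every column sum satisfies Σ_j a_{ji} ≤ 1. Let q ∈ ℝ^I_{≥0} with A_j q > 0 for every row A_j, and let δ ∈ ℝ^I_{>0}. Define δ'_i = δ_i · Π_{j=1}^J (A_j q / A_j δ)^{a_{ji}}. Then Σ_i δ'_i ≤ Σ_i δ_i + Σ_{j=1}^J (A_j q − A_j δ). -/
/-!
Weighted AM–GM, with the slack `1 - ∑ⱼ aⱼᵢ` put on the value `1`, bounds the multiplicative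
factor of `δᵢ` by `∑ⱼ aⱼᵢ rⱼ + 1 - ∑ⱼ aⱼᵢ`, where `rⱼ = Aⱼq / Aⱼδ`. Summing over `i` and
exchanging the sums, the ratios `rⱼ` are multiplied back by `Aⱼδ`, which gives `Aⱼq`.
-/

open Finset Real

theorem Real.geom_mean_le_arith_mean_weighted_of_sum_le_one {ι : Type*} [Fintype ι]
    (w z : ι → ℝ) (hw : ∀ i, 0 ≤ w i) (hw' : ∑ i, w i ≤ 1) (hz : ∀ i, 0 ≤ z i) :
    ∏ i, z i ^ w i ≤ ∑ i, w i * z i + (1 - ∑ i, w i) := by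
  have key := geom_mean_le_arith_mean_weighted (univ : Finset (Option ι))
    (fun o => o.elim (1 - ∑ i, w i) w) (fun o => o.elim 1 z)
    (fun o _ => o.rec (sub_nonneg.2 hw') hw)
    (by simp [Fintype.sum_option])
    (fun o _ => o.rec zero_le_one hz)
  simp only [Fintype.prod_option, Fintype.sum_option, Option.elim, one_rpow, one_mul] at key
  linarith

theorem sum_mul_pos_of_sum_mul_pos {ι : Type*} [Fintype ι] {a b c : ι → ℝ}
    (ha : ∀ i, 0 ≤ a i) (hb : ∀ i, 0 < b i) (hc : 0 < ∑ i, a i * c i) :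
    0 < ∑ i, a i * b i := by
  obtain ⟨i, -, hi⟩ := exists_ne_zero_of_sum_ne_zero hc.ne'
  have hai : 0 < a i := (ha i).lt_of_ne' (left_ne_zero_of_mul hi)
  exact sum_pos' (fun k _ => mul_nonneg (ha k) (hb k).le) ⟨i, mem_univ i, mul_pos hai (hb i)⟩

theorem sum_mul_sum_add_one_sub_sum {ι κ : Type*} [Fintype ι] [Fintype κ]
    (A : κ → ι → ℝ) (δ : ι → ℝ) (r : κ → ℝ) :
    ∑ i, δ i * (∑ j, A j i * r j + (1 - ∑ j, A j i)) =
      ∑ i, δ i + ∑ j, (r j - 1) * ∑ i, A j i * δ i := by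
  have hrow : ∀ i, δ i * (∑ j, A j i * r j + (1 - ∑ j, A j i)) =
      δ i + ∑ j, (r j - 1) * (A j i * δ i) := by
    intro i
    have hsum : ∑ j, (r j - 1) * (A j i * δ i) = δ i * ∑ j, A j i * r j - δ i * ∑ j, A j i := by
      simp only [mul_sum, ← sum_sub_distrib]
      exact sum_congr rfl fun j _ => by ring
    rw [hsum]
    ring
  simp only [hrow, sum_add_distrib, mul_sum]
  rw [sum_comm]

theorem gis_step_sum_le_general (J I : ℕ) (A : Fin J → Fin I → ℝ)
    (hA : ∀ j i, 0 ≤ A j i) (hcol : ∀ i, (∑ j, A j i) ≤ 1)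
    (q : Fin I → ℝ)
    (hAq : ∀ j, 0 < ∑ i, A j i * q i)
    (δ : Fin I → ℝ) (hδ : ∀ i, 0 < δ i)
    (δ' : Fin I → ℝ)
    (hδ' : ∀ i, δ' i =
      δ i * ∏ j, ((∑ i', A j i' * q i') / (∑ i', A j i' * δ i')) ^ (A j i)) :
    (∑ i, δ' i) ≤ (∑ i, δ i) + ∑ j, ((∑ i, A j i * q i) - (∑ i, A j i * δ i)) := by
  have hAδ : ∀ j, 0 < ∑ i, A j i * δ i := fun j => sum_mul_pos_of_sum_mul_pos (hA j) hδ (hAq j)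
  set r : Fin J → ℝ := fun j => (∑ i, A j i * q i) / (∑ i, A j i * δ i)
  have hr : ∀ j, 0 ≤ r j := fun j => div_nonneg (hAq j).le (hAδ j).le
  calc ∑ i, δ' i ≤ ∑ i, δ i * (∑ j, A j i * r j + (1 - ∑ j, A j i)) := by
        refine sum_le_sum fun i _ => ?_
        rw [hδ' i]
        exact mul_le_mul_of_nonneg_left (geom_mean_le_arith_mean_weighted_of_sum_le_one
          (fun j => A j i) r (fun j => hA j i) (hcol i) hr) (hδ i).le
    _ = ∑ i, δ i + ∑ j, (r j - 1) * ∑ i, A j i * δ i := sum_mul_sum_add_one_sub_sum A δ r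
    _ = _ := by simp only [r, sub_one_mul, div_mul_cancel₀ _ (hAδ _).ne']

/-- One GIS update step: the total mass increases by at most `Σⱼ (Aⱼq − Aⱼδ)`,
for a nonnegative matrix with column sums at most 1. -/
theorem gis_step_sum_le (J I : ℕ) (A : Fin J → Fin I → ℝ)
    (hA : ∀ j i, 0 ≤ A j i) (hcol : ∀ i, (∑ j, A j i) ≤ 1)
    (q : Fin I → ℝ) (hq : ∀ i, 0 ≤ q i)
    (hAq : ∀ j, 0 < ∑ i, A j i * q i)
    (δ : Fin I → ℝ) (hδ : ∀ i, 0 < δ i)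
    (δ' : Fin I → ℝ)
    (hδ' : ∀ i, δ' i =
      δ i * ∏ j, ((∑ i', A j i' * q i') / (∑ i', A j i' * δ i')) ^ (A j i)) :
    (∑ i, δ' i) ≤ (∑ i, δ i) + ∑ j, ((∑ i, A j i * q i) - (∑ i, A j i * δ i)) :=
  gis_step_sum_le_general J I A hA hcol q hAq δ hδ δ' hδ'
end

section
/- Under the assumptions of the previous setting (A a J×I nonnegative matrix with all column sums ≤ 1, q ∈ ℝ^I_{≥0} with A_j q > 0 for all j, δ ∈ ℝ^I_{>0}, and δ'_i = δ_i · Π_j (A_j q / A_j δ)^{a_{ji}}), for every z ∈ ℝ^I_{>0}: D(z, δ') ≤ D(z, δ) − Σ_j A_j z · log(A_j q / A_j δ) + Σ_j A_j q − Σ_j A_j δ, where D is the Bregman divergence D(t,u) = Σ_i t_i log(t_i/u_i) − (Σ_i t_i − Σ_i u_i). -/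
open Finset Real

/-!
Write `rⱼ = Aⱼq / Aⱼδ`, so that `δ'ᵢ = δᵢ ∏ⱼ rⱼ ^ aⱼᵢ`. Since `log δ'ᵢ = log δᵢ + Σⱼ aⱼᵢ log rⱼ`,
the entropy part of `D(z, δ')` is exactly that of `D(z, δ)` minus `Σⱼ Aⱼz log rⱼ`. For the mass
part, weighted AM-GM with the weights `aⱼᵢ` and the slack `1 - Σⱼ aⱼᵢ ≥ 0` on the value `1` gives
`∏ⱼ rⱼ ^ aⱼᵢ ≤ 1 + Σⱼ aⱼᵢ (rⱼ - 1)`, hence `Σᵢ δ'ᵢ ≤ Σᵢ δᵢ + Σⱼ (rⱼ - 1) Aⱼδ = Σᵢ δᵢ + Σⱼ (Aⱼq - Aⱼδ)`.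
-/

variable {ι κ : Type*} [Fintype ι] [Fintype κ]

theorem Real.prod_rpow_le_sum_mul_add_one_sub (w r : κ → ℝ) (hw : ∀ j, 0 ≤ w j)
    (hw1 : ∑ j, w j ≤ 1) (hr : ∀ j, 0 ≤ r j) :
    ∏ j, r j ^ w j ≤ ∑ j, w j * r j + (1 - ∑ j, w j) := by
  -- AM-GM over `Option κ`, with the slack weight `1 - Σ w` put on the value `1` at `none`
  have h := geom_mean_le_arith_mean_weighted univ
    (fun o : Option κ => o.elim (1 - ∑ j, w j) w) (fun o => o.elim 1 r)
    (fun o _ => by cases o <;> simp [hw, hw1])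
    (by simp [Fintype.sum_option])
    (fun o _ => by cases o <;> simp [hr])
  simpa [Fintype.prod_option, Fintype.sum_option, add_comm] using h

theorem sum_mul_pos_of_sum_mul_ne_zero {w x y : ι → ℝ} (hw : ∀ i, 0 ≤ w i)
    (hx : ∀ i, 0 < x i) (hy : ∑ i, w i * y i ≠ 0) : 0 < ∑ i, w i * x i := by
  obtain ⟨i, -, hi⟩ := exists_ne_zero_of_sum_ne_zero hy
  exact sum_pos' (fun i _ => mul_nonneg (hw i) (hx i).le)
    ⟨i, mem_univ i, mul_pos ((hw i).lt_of_ne' (left_ne_zero_of_mul hi)) (hx i)⟩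

theorem Real.log_prod_rpow (a : κ → ℝ) {r : κ → ℝ} (hr : ∀ j, 0 < r j) :
    log (∏ j, r j ^ a j) = ∑ j, a j * log (r j) := by
  rw [log_prod fun j _ => (rpow_pos_of_pos (hr j) _).ne']
  simp only [log_rpow (hr _)]

theorem sum_mul_log_div_mul_prod_rpow (A : κ → ι → ℝ) {r : κ → ℝ} (hr : ∀ j, 0 < r j)
    {δ : ι → ℝ} (hδ : ∀ i, 0 < δ i) (z : ι → ℝ) :
    ∑ i, z i * log (z i / (δ i * ∏ j, r j ^ A j i)) =
      ∑ i, z i * log (z i / δ i) - ∑ j, (∑ i, A j i * z i) * log (r j) := by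
  have hterm : ∀ i, z i * log (z i / (δ i * ∏ j, r j ^ A j i)) =
      z i * log (z i / δ i) - ∑ j, A j i * z i * log (r j) := by
    intro i
    rcases eq_or_ne (z i) 0 with hz | hz
    · simp [hz]
    have hP : 0 < ∏ j, r j ^ A j i := prod_pos fun j _ => rpow_pos_of_pos (hr j) _
    rw [← div_div, log_div (div_ne_zero hz (hδ i).ne') hP.ne', log_prod_rpow _ hr, mul_sub,
      mul_sum]
    congr 1
    exact sum_congr rfl fun j _ => by ring
  simp only [hterm, sum_sub_distrib, sum_mul]
  rw [sum_comm]

theorem sum_mul_prod_rpow_le (A : κ → ι → ℝ) (hA : ∀ j i, 0 ≤ A j i)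
    (hcol : ∀ i, ∑ j, A j i ≤ 1) {r : κ → ℝ} (hr : ∀ j, 0 ≤ r j)
    {δ : ι → ℝ} (hδ : ∀ i, 0 ≤ δ i) :
    ∑ i, δ i * ∏ j, r j ^ A j i ≤ ∑ i, δ i + ∑ j, (r j - 1) * ∑ i, A j i * δ i := by
  have hterm : ∀ i, δ i * ∏ j, r j ^ A j i ≤ δ i + ∑ j, (r j - 1) * (A j i * δ i) := by
    intro i
    calc δ i * ∏ j, r j ^ A j i
        ≤ δ i * (∑ j, A j i * r j + (1 - ∑ j, A j i)) :=
          mul_le_mul_of_nonneg_left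
            (prod_rpow_le_sum_mul_add_one_sub _ r (fun j => hA j i) (hcol i) hr) (hδ i)
      _ = δ i + ∑ j, (r j - 1) * (A j i * δ i) := by
          have hsum : ∑ j, (r j - 1) * (A j i * δ i) =
              δ i * (∑ j, A j i * r j - ∑ j, A j i) := by
            rw [mul_sub, mul_sum, mul_sum, ← sum_sub_distrib]
            exact sum_congr rfl fun j _ => by ring
          rw [hsum]
          ring
  calc ∑ i, δ i * ∏ j, r j ^ A j i
      ≤ ∑ i, (δ i + ∑ j, (r j - 1) * (A j i * δ i)) := sum_le_sum fun i _ => hterm i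
    _ = ∑ i, δ i + ∑ j, (r j - 1) * ∑ i, A j i * δ i := by
        simp only [sum_add_distrib, mul_sum]
        rw [sum_comm]

theorem gis_step_bregman_le_general (J I : ℕ) (A : Fin J → Fin I → ℝ)
    (hA : ∀ j i, 0 ≤ A j i) (hcol : ∀ i, (∑ j, A j i) ≤ 1)
    (q : Fin I → ℝ)
    (hAq : ∀ j, 0 < ∑ i, A j i * q i)
    (δ : Fin I → ℝ) (hδ : ∀ i, 0 < δ i)
    (δ' : Fin I → ℝ)
    (hδ' : ∀ i, δ' i =
      δ i * ∏ j, ((∑ i', A j i' * q i') / (∑ i', A j i' * δ i')) ^ (A j i))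
    (z : Fin I → ℝ) :
    (∑ i, z i * Real.log (z i / δ' i)) - ((∑ i, z i) - (∑ i, δ' i)) ≤
      ((∑ i, z i * Real.log (z i / δ i)) - ((∑ i, z i) - (∑ i, δ i)))
      - (∑ j, (∑ i, A j i * z i) *
          Real.log ((∑ i, A j i * q i) / (∑ i, A j i * δ i)))
      + (∑ j, ∑ i, A j i * q i) - (∑ j, ∑ i, A j i * δ i) := by
  have hAδ : ∀ j, 0 < ∑ i, A j i * δ i := fun j =>
    sum_mul_pos_of_sum_mul_ne_zero (hA j) hδ (hAq j).ne'
  have hr : ∀ j, 0 < (∑ i, A j i * q i) / ∑ i, A j i * δ i := fun j => div_pos (hAq j) (hAδ j)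
  obtain rfl : δ' = _ := funext hδ'
  have hmass := sum_mul_prod_rpow_le A hA hcol (fun j => (hr j).le) (fun i => (hδ i).le)
  have hgain : ∑ j, ((∑ i, A j i * q i) / (∑ i, A j i * δ i) - 1) * ∑ i, A j i * δ i =
      ∑ j, ∑ i, A j i * q i - ∑ j, ∑ i, A j i * δ i := by
    rw [← sum_sub_distrib]
    exact sum_congr rfl fun j _ => by rw [sub_one_mul, div_mul_cancel₀ _ (hAδ j).ne']
  rw [sum_mul_log_div_mul_prod_rpow A hr hδ z]
  linarith

/-- One GIS update step decreases the Bregman divergence to any positive vector `z`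
by at least `Σⱼ Aⱼz · log(Aⱼq/Aⱼδ) − Σⱼ Aⱼq + Σⱼ Aⱼδ`. -/
theorem gis_step_bregman_le (J I : ℕ) (A : Fin J → Fin I → ℝ)
    (hA : ∀ j i, 0 ≤ A j i) (hcol : ∀ i, (∑ j, A j i) ≤ 1)
    (q : Fin I → ℝ) (hq : ∀ i, 0 ≤ q i)
    (hAq : ∀ j, 0 < ∑ i, A j i * q i)
    (δ : Fin I → ℝ) (hδ : ∀ i, 0 < δ i)
    (δ' : Fin I → ℝ)
    (hδ' : ∀ i, δ' i =
      δ i * ∏ j, ((∑ i', A j i' * q i') / (∑ i', A j i' * δ i')) ^ (A j i))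
    (z : Fin I → ℝ) (hz : ∀ i, 0 < z i) :
    (∑ i, z i * Real.log (z i / δ' i)) - ((∑ i, z i) - (∑ i, δ' i)) ≤
      ((∑ i, z i * Real.log (z i / δ i)) - ((∑ i, z i) - (∑ i, δ i)))
      - (∑ j, (∑ i, A j i * z i) *
          Real.log ((∑ i, A j i * q i) / (∑ i, A j i * δ i)))
      + (∑ j, ∑ i, A j i * q i) - (∑ j, ∑ i, A j i * δ i) :=
  gis_step_bregman_le_general J I A hA hcol q hAq δ hδ δ' hδ' z
end

section
/- Let A be a J×I matrix with nonnegative entries and all column sums ≤ 1, q ∈ ℝ^I_{>0}, and let δ^{(n)} be the GIS(1) sequence defined by δ^{(0)} = 1 and δ^{(n+1)}_i = δ^{(n)}_i Π_j (A_j q / A_j δ^{(n)})^{a_{ji}}, assuming A_j δ^{(n)} > 0 for all j,n. Then the sequence D(q, δ^{(n)}) is monotone nonincreasing in n, where D is the Bregman divergence. -/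
/-!
One GIS(1) step `δ ↦ δ'` satisfies `D(q, δ') ≤ D(q, δ) - D(Aq, Aδ)`. Taking logarithms,
`log δ'ᵢ = log δᵢ + ∑ⱼ aⱼᵢ log ((Aq)ⱼ / (Aδ)ⱼ)`, so the entropy part of `D(q, ·)` drops by exactly
`∑ⱼ (Aq)ⱼ log ((Aq)ⱼ / (Aδ)ⱼ)`. The product defining `δ'ᵢ` is a weighted geometric mean with
weights the `i`-th column of `A`, of total mass `≤ 1`; weighted AM-GM, with the missing mass on
the value `1`, bounds the growth of the total mass `∑ᵢ δ'ᵢ - ∑ᵢ δᵢ` by `∑ⱼ ((Aq)ⱼ - (Aδ)ⱼ)`.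
Since `D(Aq, Aδ) ≥ 0`, the divergence is nonincreasing.
-/

open Finset Real Matrix InformationTheory

variable {ι κ : Type*} [Fintype ι]

/-- The Bregman divergence `D` of `t ↦ t log t - t` (generalized Kullback–Leibler divergence). -/
noncomputable def bregmanDiv (t u : ι → ℝ) : ℝ :=
  (∑ i, t i * log (t i / u i)) - ((∑ i, t i) - (∑ i, u i))

lemma mul_log_div_add_sub_eq_mul_klFun (a : ℝ) {b : ℝ} (hb : 0 < b) :
    a * log (a / b) + b - a = b * klFun (a / b) := by
  rw [klFun_apply]
  field_simp

lemma bregmanDiv_nonneg {t u : ι → ℝ} (ht : ∀ i, 0 ≤ t i) (hu : ∀ i, 0 < u i) :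
    0 ≤ bregmanDiv t u := by
  have h : bregmanDiv t u = ∑ i, u i * klFun (t i / u i) := by
    simp only [← mul_log_div_add_sub_eq_mul_klFun _ (hu _), sum_sub_distrib, sum_add_distrib,
      bregmanDiv]
    ring
  rw [h]
  exact sum_nonneg fun i _ => mul_nonneg (hu i).le (klFun_nonneg (div_nonneg (ht i) (hu i).le))

-- At `x = 0` both sides vanish because `log 0 = 0`.
lemma Real.log_rpow_of_nonneg {x : ℝ} (hx : 0 ≤ x) (y : ℝ) : log (x ^ y) = y * log x := by
  rcases hx.eq_or_lt with rfl | hx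
  · by_cases hy : y = 0 <;> simp [hy, zero_rpow]
  · exact log_rpow hx y

-- Weighted AM-GM after putting the missing mass `1 - ∑ w` on the value `1`.
lemma prod_rpow_le_one_sub_sum_add_sum (w z : ι → ℝ) (hw : ∀ j, 0 ≤ w j) (hw1 : ∑ j, w j ≤ 1)
    (hz : ∀ j, 0 ≤ z j) :
    ∏ j, z j ^ w j ≤ 1 - ∑ j, w j + ∑ j, w j * z j := by
  set W : Option ι → ℝ := fun o => o.elim (1 - ∑ j, w j) w
  set Z : Option ι → ℝ := fun o => o.elim 1 z
  have h := geom_mean_le_arith_mean_weighted univ W Z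
    (fun o _ => by rcases o with _ | j <;> simp [W, hw, sub_nonneg.2 hw1])
    (by simp [W, Fintype.sum_option])
    (fun o _ => by rcases o with _ | j <;> simp [Z, hz])
  simpa [W, Z, Fintype.prod_option, Fintype.sum_option] using h

lemma Matrix.mulVec_nonneg {A : Matrix κ ι ℝ} {v : ι → ℝ} (hA : ∀ j i, 0 ≤ A j i)
    (hv : ∀ i, 0 ≤ v i) (j : κ) : 0 ≤ (A *ᵥ v) j :=
  sum_nonneg fun i _ => mul_nonneg (hA j i) (hv i)

noncomputable def gisStep [Fintype κ] (A : Matrix κ ι ℝ) (q d : ι → ℝ) : ι → ℝ :=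
  fun i => d i * ∏ j, ((A *ᵥ q) j / (A *ᵥ d) j) ^ A j i

section gisStep

variable {A : Matrix κ ι ℝ} {q d : ι → ℝ}

lemma gisStep_factor_pos (hA : ∀ j i, 0 ≤ A j i) (hq : ∀ i, 0 < q i)
    (hAd : ∀ j, 0 < (A *ᵥ d) j) (j : κ) (i : ι) :
    0 < ((A *ᵥ q) j / (A *ᵥ d) j) ^ A j i := by
  rcases (hA j i).eq_or_lt with h | h
  · rw [← h, rpow_zero]
    exact one_pos
  · have hle : A j i * q i ≤ (A *ᵥ q) j :=
      single_le_sum (f := fun i => A j i * q i)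
        (fun i' _ => mul_nonneg (hA j i') (hq i').le) (mem_univ i)
    exact rpow_pos_of_pos (div_pos ((mul_pos h (hq i)).trans_le hle) (hAd j)) _

variable [Fintype κ]

lemma gisStep_pos (hA : ∀ j i, 0 ≤ A j i) (hq : ∀ i, 0 < q i) (hd : ∀ i, 0 < d i)
    (hAd : ∀ j, 0 < (A *ᵥ d) j) (i : ι) : 0 < gisStep A q d i :=
  mul_pos (hd i) (prod_pos fun j _ => gisStep_factor_pos hA hq hAd j i)

lemma log_gisStep (hA : ∀ j i, 0 ≤ A j i) (hq : ∀ i, 0 < q i) (hd : ∀ i, 0 < d i)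
    (hAd : ∀ j, 0 < (A *ᵥ d) j) (i : ι) :
    log (gisStep A q d i) = log (d i) + ∑ j, A j i * log ((A *ᵥ q) j / (A *ᵥ d) j) := by
  rw [gisStep, log_mul (hd i).ne' (prod_pos fun j _ => gisStep_factor_pos hA hq hAd j i).ne',
    log_prod fun j _ => (gisStep_factor_pos hA hq hAd j i).ne']
  simp only [log_rpow_of_nonneg (div_nonneg (mulVec_nonneg hA (fun i => (hq i).le) _) (hAd _).le)]

lemma sum_mul_log_div_gisStep (hA : ∀ j i, 0 ≤ A j i) (hq : ∀ i, 0 < q i) (hd : ∀ i, 0 < d i)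
    (hAd : ∀ j, 0 < (A *ᵥ d) j) :
    ∑ i, q i * log (q i / gisStep A q d i) =
      ∑ i, q i * log (q i / d i) - ∑ j, (A *ᵥ q) j * log ((A *ᵥ q) j / (A *ᵥ d) j) := by
  set L : κ → ℝ := fun j => log ((A *ᵥ q) j / (A *ᵥ d) j)
  calc ∑ i, q i * log (q i / gisStep A q d i)
      = ∑ i, (q i * log (q i / d i) - ∑ j, A j i * q i * L j) := by
        refine sum_congr rfl fun i _ => ?_
        rw [log_div (hq i).ne' (gisStep_pos hA hq hd hAd i).ne', log_div (hq i).ne' (hd i).ne',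
          log_gisStep hA hq hd hAd i]
        rw [show ∑ j, A j i * q i * L j = q i * ∑ j, A j i * L j by
          rw [mul_sum]; exact sum_congr rfl fun _ _ => by ring]
        ring
    _ = ∑ i, q i * log (q i / d i) - ∑ j, (A *ᵥ q) j * L j := by
        rw [sum_sub_distrib, sum_comm]
        simp only [mulVec, dotProduct, sum_mul]

lemma sum_gisStep_le (hA : ∀ j i, 0 ≤ A j i) (hcol : ∀ i, ∑ j, A j i ≤ 1) (hq : ∀ i, 0 < q i)
    (hd : ∀ i, 0 < d i) (hAd : ∀ j, 0 < (A *ᵥ d) j) :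
    ∑ i, gisStep A q d i ≤ ∑ i, d i + (∑ j, (A *ᵥ q) j - ∑ j, (A *ᵥ d) j) := by
  set r : κ → ℝ := fun j => (A *ᵥ q) j / (A *ᵥ d) j
  have hr : ∀ j, 0 ≤ r j := fun j =>
    div_nonneg (mulVec_nonneg hA (fun i => (hq i).le) j) (hAd j).le
  calc ∑ i, gisStep A q d i
      ≤ ∑ i, d i * (1 - ∑ j, A j i + ∑ j, A j i * r j) :=
        sum_le_sum fun i _ => mul_le_mul_of_nonneg_left
          (prod_rpow_le_one_sub_sum_add_sum _ r (fun j => hA j i) (hcol i) hr) (hd i).le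
    _ = ∑ i, (d i + ∑ j, A j i * d i * (r j - 1)) := by
        refine sum_congr rfl fun i _ => ?_
        simp only [mul_sub, mul_one, sum_sub_distrib, mul_add, mul_sum]
        ring_nf
    _ = ∑ i, d i + ∑ j, (A *ᵥ d) j * (r j - 1) := by
        rw [sum_add_distrib, sum_comm]
        simp only [mulVec, dotProduct, sum_mul]
    _ = ∑ i, d i + (∑ j, (A *ᵥ q) j - ∑ j, (A *ᵥ d) j) := by
        simp only [r, mul_sub, mul_one, mul_div_cancel₀ _ (hAd _).ne', sum_sub_distrib]

lemma bregmanDiv_gisStep_le (hA : ∀ j i, 0 ≤ A j i) (hcol : ∀ i, ∑ j, A j i ≤ 1)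
    (hq : ∀ i, 0 < q i) (hd : ∀ i, 0 < d i) (hAd : ∀ j, 0 < (A *ᵥ d) j) :
    bregmanDiv q (gisStep A q d) ≤ bregmanDiv q d - bregmanDiv (A *ᵥ q) (A *ᵥ d) := by
  have hmass := sum_gisStep_le hA hcol hq hd hAd
  simp only [bregmanDiv, sum_mul_log_div_gisStep hA hq hd hAd]
  linarith

end gisStep

/-- Along the GIS(1) sequence, the Bregman divergence `D(q, δ⁽ⁿ⁾)` is
monotone nonincreasing in `n`. -/
theorem gis_bregman_antitone (J I : ℕ) (A : Fin J → Fin I → ℝ)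
    (hA : ∀ j i, 0 ≤ A j i) (hcol : ∀ i, (∑ j, A j i) ≤ 1)
    (q : Fin I → ℝ) (hq : ∀ i, 0 < q i)
    (δ : ℕ → Fin I → ℝ) (hδ0 : ∀ i, δ 0 i = 1)
    (hpos : ∀ n j, 0 < ∑ i, A j i * δ n i)
    (hrec : ∀ n i, δ (n + 1) i =
      δ n i * ∏ j, ((∑ i', A j i' * q i') / (∑ i', A j i' * δ n i')) ^ (A j i)) :
    Antitone (fun n =>
      (∑ i, q i * Real.log (q i / δ n i)) - ((∑ i, q i) - (∑ i, δ n i))) := by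
  have hstep : ∀ n, δ (n + 1) = gisStep A q (δ n) := fun n => funext (hrec n)
  have hδpos : ∀ n i, 0 < δ n i := by
    intro n
    induction n with
    | zero => simp [hδ0]
    | succ n ih => rw [hstep n]; exact gisStep_pos hA hq ih (hpos n)
  refine antitone_nat_of_succ_le fun n => ?_
  change bregmanDiv q (δ (n + 1)) ≤ bregmanDiv q (δ n)
  rw [hstep n]
  linarith [bregmanDiv_gisStep_le hA hcol hq (hδpos n) (hpos n),
    bregmanDiv_nonneg (u := A *ᵥ δ n) (mulVec_nonneg hA fun i => (hq i).le) (hpos n)]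
end

section
/- Let y ∈ ℝ⁴_{>0}, N = y1+y2+y3+y4, z1 = 3y1+2y2+y3, z2 = y2+y3+y4, z3 = z1+z2, and define p̂ = (z1³/z3³, z1²z2/z3³, z1z2/z3², z2/z3). Then for the matrix A = [[3,2,1,0],[0,1,1,1]], one has A p̂ = γ · A (y/N) with adjustment factor γ = N·(z1² + z1·z3 + z3²)/z3³. -/
/-!
Put `t = z₁/z₃`, so that `z₂/z₃ = 1 - t` and `p̂ = (t³, t²(1-t), t(1-t), 1-t)`. Both rows of `A p̂`
collapse to `(1 + t + t²)` times the corresponding coordinate of `(t, 1 - t) = (z₁, z₂)/z₃`,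
while `A (y/N) = (z₁, z₂)/N`; the ratio is `γ = N (1 + t + t²)/z₃`.
-/

section
variable {K : Type*} [Field K]

theorem three_mul_cube_div_add_eq_of_eq_add {z1 z2 z3 : K} (hz3 : z3 = z1 + z2) :
    3 * (z1^3 / z3^3) + 2 * (z1^2 * z2 / z3^3) + z1 * z2 / z3^2
      = z1 * (z1^2 + z1*z3 + z3^2) / z3^3 := by
  rcases eq_or_ne z3 0 with h0 | h0
  · simp [h0]
  · field_simp
    rw [eq_sub_of_add_eq' hz3.symm]
    ring

theorem sq_mul_div_cube_add_eq (z1 z2 z3 : K) :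
    z1^2 * z2 / z3^3 + z1 * z2 / z3^2 + z2 / z3 = z2 * (z1^2 + z1*z3 + z3^2) / z3^3 := by
  rcases eq_or_ne z3 0 with h0 | h0
  · simp [h0]
  · field_simp

theorem mul_div_mul_div_cancel_left {N a b : K} (hN : N ≠ 0) (x : K) :
    N * a / b * (x / N) = x * a / b := by
  field_simp

end

/-- The closed-form MLE `p̂` satisfies `A p̂ = γ · A (y/N)` with adjustment
factor `γ = N (z₁² + z₁z₃ + z₃²)/z₃³`, for `A = [[3,2,1,0],[0,1,1,1]]`. -/
theorem adjustment_factor_identity (y1 y2 y3 y4 N z1 z2 z3 γ : ℝ)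
    (h1 : 0 < y1) (h2 : 0 < y2) (h3 : 0 < y3) (h4 : 0 < y4)
    (hN : N = y1 + y2 + y3 + y4)
    (hz1 : z1 = 3*y1 + 2*y2 + y3) (hz2 : z2 = y2 + y3 + y4)
    (hz3 : z3 = z1 + z2)
    (hγ : γ = N * (z1^2 + z1*z3 + z3^2) / z3^3) :
    3 * (z1^3 / z3^3) + 2 * (z1^2 * z2 / z3^3) + (z1 * z2 / z3^2)
        = γ * ((3*y1 + 2*y2 + y3) / N) ∧
    (z1^2 * z2 / z3^3) + (z1 * z2 / z3^2) + (z2 / z3)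
        = γ * ((y2 + y3 + y4) / N) := by
  have hN0 : N ≠ 0 := by rw [hN]; positivity
  rw [hγ, mul_div_mul_div_cancel_left hN0, mul_div_mul_div_cancel_left hN0, ← hz1, ← hz2]
  exact ⟨three_mul_cube_div_add_eq_of_eq_add hz3, sq_mul_div_cube_add_eq z1 z2 z3⟩
end

section
/- Let z1, z2, z3, z4 > 0 and r = (2z2z3/(3z1z4), 4z3³/(27z1z4²), 4z2³/(27z1²z4), z2²z3²/(27z1²z4²)). If additionally z1 = y1+y2+2y3+2y4, z2 = y1+3y3+2y4, z3 = y1+3y2+2y4, z4 = y1+2y2+y3+2y4 for some y1,y2,y3,y4 > 0, then r1 + r2 + r3 + r4 = 1. -/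
/-- Normalization of the closed-form MLE for the affine log-linear model:
the entries of `r` sum to `1` when the `zᵢ` are the stated linear forms in
positive data `y`. -/
theorem affine_mle_sums_to_one (y1 y2 y3 y4 z1 z2 z3 z4 r1 r2 r3 r4 : ℝ)
    (h1 : 0 < y1) (h2 : 0 < y2) (h3 : 0 < y3) (h4 : 0 < y4)
    (hz1 : z1 = y1 + y2 + 2*y3 + 2*y4)
    (hz2 : z2 = y1 + 3*y3 + 2*y4)
    (hz3 : z3 = y1 + 3*y2 + 2*y4)
    (hz4 : z4 = y1 + 2*y2 + y3 + 2*y4)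
    (hr1 : r1 = 2*z2*z3 / (3*z1*z4))
    (hr2 : r2 = 4*z3^3 / (27*z1*z4^2))
    (hr3 : r3 = 4*z2^3 / (27*z1^2*z4))
    (hr4 : r4 = z2^2*z3^2 / (27*z1^2*z4^2)) :
    r1 + r2 + r3 + r4 = 1 := by
  have hz1p : (0:ℝ) < z1 := by rw [hz1]; linarith
  have hz4p : (0:ℝ) < z4 := by rw [hz4]; linarith
  have h1' : z1 ≠ 0 := hz1p.ne'
  have h4' : z4 ≠ 0 := hz4p.ne'
  have key : 18*z1*z2*z3*z4 + 4*z1*z3^3 + 4*z2^3*z4 + z2^2*z3^2 = 27*z1^2*z4^2 := by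
    subst hz1 hz2 hz3 hz4; ring
  have h27 : (27*z1^2*z4^2 : ℝ) ≠ 0 := by positivity
  have hsum : r1 + r2 + r3 + r4
      = (18*z1*z2*z3*z4 + 4*z1*z3^3 + 4*z2^3*z4 + z2^2*z3^2)/(27*z1^2*z4^2) := by
    rw [hr1, hr2, hr3, hr4]
    field_simp
    ring
  rw [hsum, key, div_self h27]
end
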